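/- arXiv:2210.05150 — 2 statements merged into one kernel-verified Lean document; each statement's English description precedes it below -/
import Mathlib

section
/- Let D be a nonnegative asymmetric distance on a set S satisfying the triangle inequality and D(x,x)=0. Let ε > 0, c_l > 2ε, and let V ⊆ S be an ε-resolution set: every s ∈ S has some v ∈ V with max(D(s,v), D(v,s)) < ε. Then for any s, g ∈ S with D(s,g) = T ≥ c_l - ε, and assuming every intermediate distance can be realized on a shortest path (i.e., for each x on the path to g and each r ≤ D(x,g) there is p with D(x,p) = r and D(p,g) = D(x,g) - r), there exists a finite sequence s = w₀, w₁, ..., w_k, with all w_i (1 ≤ i ≤ k) in V, such that D(w_i, w_{i+1}) < c_l for all i, k ≥ ⌊T/c_l⌋, and D(w_k, g) ≤ T - k·c_l + 2k·ε. -/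
theorem stmt_10 {S : Type*} (D : S → S → ℝ)
    (hnonneg : ∀ x y, 0 ≤ D x y)
    (htri : ∀ x y z, D x z ≤ D x y + D y z)
    (hrefl : ∀ x, D x x = 0)
    (ε cl : ℝ) (hε : 0 < ε) (hcl : 2 * ε < cl)
    (V : Set S)
    (hres : ∀ s : S, ∃ v ∈ V, max (D s v) (D v s) < ε)
    (s g : S) (T : ℝ) (hT : D s g = T) (hTcl : cl - ε ≤ T)
    (hinter : ∀ x : S, ∀ r : ℝ, 0 ≤ r → r ≤ D x g →
      ∃ p : S, D x p = r ∧ D p g = D x g - r) :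
    ∃ (k : ℕ) (w : ℕ → S), w 0 = s ∧
      (∀ i, 1 ≤ i → i ≤ k → w i ∈ V) ∧
      (∀ i < k, D (w i) (w (i + 1)) < cl) ∧
      (⌊T / cl⌋).toNat ≤ k ∧
      D (w k) g ≤ T - k * cl + 2 * k * ε := by
  have hclpos : 0 < cl := lt_trans (by linarith) hcl
  have hL : ∀ n : ℕ, (n : ℝ) * cl ≤ T →
      ∃ w : ℕ → S, w 0 = s ∧ (∀ i, 1 ≤ i → i ≤ n → w i ∈ V) ∧
        (∀ i < n, D (w i) (w (i + 1)) < cl) ∧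
        T - n * cl ≤ D (w n) g ∧ D (w n) g ≤ T - n * cl + 2 * n * ε := by
    intro n
    induction n with
    | zero =>
      intro _
      exact ⟨fun _ => s, rfl, fun i h1 h2 => absurd (le_trans h1 h2) (by norm_num),
        fun i h => absurd h (Nat.not_lt_zero i), by simp [hT], by simp [hT]⟩
    | succ n ih =>
      intro hn1
      have hn : (n : ℝ) * cl ≤ T := by
        push_cast at hn1 ⊢; nlinarith
      obtain ⟨w, hw0, hwV, hwE, hlo, hhi⟩ := ih hn
      have hd : cl - ε ≤ D (w n) g := by
        push_cast at hn1; linarith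
      obtain ⟨p, hp1, hp2⟩ := hinter (w n) (cl - ε) (by linarith) hd
      obtain ⟨v, hvV, hv⟩ := hres p
      have hpv : D p v < ε := lt_of_le_of_lt (le_max_left _ _) hv
      have hvp : D v p < ε := lt_of_le_of_lt (le_max_right _ _) hv
      refine ⟨fun i => if i ≤ n then w i else v, by simp [hw0], ?_, ?_, ?_, ?_⟩
      · intro i h1 h2
        by_cases hi : i ≤ n
        · simpa [hi] using hwV i h1 hi
        · simpa [hi] using hvV
      · intro i hi
        by_cases hin : i < n
        · have h1 : i ≤ n := le_of_lt hin
          have h2 : i + 1 ≤ n := hin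
          simpa [h1, h2] using hwE i hin
        · have hieq : i = n := by omega
          subst hieq
          have : D (w i) v ≤ D (w i) p + D p v := htri _ _ _
          simp only [le_refl, if_pos, Nat.lt_irrefl]
          have h2 : ¬ (i + 1 ≤ i) := by omega
          simp only [h2, if_neg, not_false_iff]
          calc D (w i) v ≤ D (w i) p + D p v := htri _ _ _
            _ < cl := by rw [hp1]; linarith
      · have h2 : ¬ (n + 1 ≤ n) := by omega
        simp only [h2, if_neg, not_false_iff]
        have htr : D (w n) g ≤ D (w n) v + D v g := htri _ _ _
        have hwv : D (w n) v ≤ D (w n) p + D p v := htri _ _ _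
        push_cast
        nlinarith
      · have h2 : ¬ (n + 1 ≤ n) := by omega
        simp only [h2, if_neg, not_false_iff]
        have htr : D v g ≤ D v p + D p g := htri _ _ _
        push_cast
        nlinarith
  set k : ℕ := (⌊T / cl⌋).toNat with hk
  have hT0 : 0 ≤ T := hT ▸ hnonneg s g
  have hfl : 0 ≤ ⌊T / cl⌋ := Int.floor_nonneg.mpr (div_nonneg hT0 hclpos.le)
  have hkle : (k : ℝ) ≤ T / cl := by
    have hcast : ((⌊T / cl⌋.toNat : ℕ) : ℝ) = ((⌊T / cl⌋ : ℤ) : ℝ) := by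
      rw [← Int.cast_natCast, Int.toNat_of_nonneg hfl]
    rw [hk, hcast]
    exact Int.floor_le _
  have hkcl : (k : ℝ) * cl ≤ T := by
    calc (k : ℝ) * cl ≤ (T / cl) * cl := by nlinarith
      _ = T := div_mul_cancel₀ T hclpos.ne'
  obtain ⟨w, hw0, hwV, hwE, _, hhi⟩ := hL k hkcl
  exact ⟨k, w, hw0, hwV, hwE, le_refl k, hhi⟩
end

section
/- Let D be a nonnegative asymmetric distance with triangle inequality on a set S, and V ⊆ S an ε-resolution set for D. If every pair of points in V at D-distance less than c_l is connected by a directed edge, and 2ε < c_l, then for any s, g ∈ S satisfying the shortest-path intermediate-point property, there is a directed path in the graph (with s and g adjoined as vertices, connected to all vertices within D-distance c_l) from s to g whose every edge has cost less than c_l. -/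
theorem stmt_15 {S : Type*} (D : S → S → ℝ)
    (hnonneg : ∀ x y, 0 ≤ D x y)
    (htri : ∀ x y z, D x z ≤ D x y + D y z)
    (hrefl : ∀ x, D x x = 0)
    (ε cl : ℝ) (hε : 0 < ε) (hcl : 2 * ε < cl)
    (V : Set S)
    (hres : ∀ s : S, ∃ v ∈ V, max (D s v) (D v s) < ε)
    (s g : S)
    (hinter : ∀ x : S, ∀ r : ℝ, 0 ≤ r → r ≤ D x g →
      ∃ p : S, D x p = r ∧ D p g = D x g - r) :
    ∃ (k : ℕ) (w : ℕ → S), w 0 = s ∧ w k = g ∧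
      (∀ i ≤ k, w i ∈ V ∪ {s, g}) ∧
      (∀ i < k, D (w i) (w (i + 1)) < cl) := by
  have key : ∀ n : ℕ, ∀ x : S, D x g < n * (cl - 2 * ε) + cl →
      ∃ (k : ℕ) (w : ℕ → S), w 0 = x ∧ w k = g ∧
        (∀ i, 0 < i → i < k → w i ∈ V) ∧
        (∀ i < k, D (w i) (w (i + 1)) < cl) := by
    intro n
    induction n with
    | zero =>
      intro x hx
      refine ⟨1, fun i => if i = 0 then x else g, by simp, by simp, ?_, ?_⟩
      · intro i hi hik; omega
      · intro i hi
        interval_cases i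
        simpa using (by simpa using hx : D x g < cl)
    | succ n ih =>
      intro x hx
      by_cases hxg : D x g < cl
      · refine ⟨1, fun i => if i = 0 then x else g, by simp, by simp, ?_, ?_⟩
        · intro i hi hik; omega
        · intro i hi
          interval_cases i
          simpa using hxg
      · push_neg at hxg
        have hr0 : (0:ℝ) ≤ cl - ε := by linarith
        have hr1 : cl - ε ≤ D x g := by linarith
        obtain ⟨p, hp1, hp2⟩ := hinter x (cl - ε) hr0 hr1
        obtain ⟨v, hv, hvd⟩ := hres p
        have h1 : D p v < ε := lt_of_le_of_lt (le_max_left _ _) hvd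
        have h2 : D v p < ε := lt_of_le_of_lt (le_max_right _ _) hvd
        have hxv : D x v < cl := by
          have := htri x p v
          rw [hp1] at this
          linarith
        have hvg : D v g < n * (cl - 2 * ε) + cl := by
          have h3 := htri v p g
          rw [hp2] at h3
          have hcast : ((n:ℝ) + 1) * (cl - 2 * ε) = n * (cl - 2 * ε) + (cl - 2 * ε) := by
            ring
          push_cast at hx
          linarith [hx, hcast.symm.le, hcast.le]
        obtain ⟨k, w, hw0, hwk, hwV, hwstep⟩ := ih v hvg
        refine ⟨k + 1, fun i => if i = 0 then x else w (i - 1), by simp, ?_, ?_, ?_⟩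
        · simpa using hwk
        · intro i hi hik
          simp only [Nat.pos_iff_ne_zero.mp hi, if_neg (Nat.pos_iff_ne_zero.mp hi)]
          rcases Nat.eq_or_lt_of_le (Nat.one_le_iff_ne_zero.mpr (Nat.pos_iff_ne_zero.mp hi)) with h | h
          · rw [← h]; simpa [hw0] using hv
          · exact hwV (i - 1) (by omega) (by omega)
        · intro i hi
          rcases Nat.eq_zero_or_pos i with h0 | h0
          · subst h0
            simpa [hw0] using hxv
          · have hne : i ≠ 0 := Nat.pos_iff_ne_zero.mp h0
            have : i - 1 + 1 = i := by omega
            simp only [if_neg hne, if_neg (Nat.succ_ne_zero i)]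
            have := hwstep (i - 1) (by omega)
            simpa [Nat.sub_add_cancel h0] using this
  have hpos : (0:ℝ) < cl - 2 * ε := by linarith
  obtain ⟨n, hn⟩ := exists_nat_gt (D s g / (cl - 2 * ε))
  have hDsg : D s g < n * (cl - 2 * ε) + cl := by
    have := (div_lt_iff₀ hpos).mp hn
    linarith [hnonneg s g, hε]
  obtain ⟨k, w, hw0, hwk, hwV, hwstep⟩ := key n s hDsg
  refine ⟨k, w, hw0, hwk, ?_, hwstep⟩
  intro i hi
  rcases Nat.eq_zero_or_pos i with h0 | h0
  · subst h0; rw [hw0]; right; exact Set.mem_insert _ _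
  · rcases Nat.eq_or_lt_of_le hi with h | h
    · subst h; rw [hwk]; right; exact Set.mem_insert_of_mem _ rfl
    · exact Set.mem_union_left _ (hwV i h0 h)
end
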